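/- arXiv:1605.04301 — 5 statements merged into one kernel-verified Lean document; each statement's English description precedes it below -/
import Mathlib

section
/- Let G be a red-blue graph on n vertices containing no blue 3-cycle. Then either G_red contains a Hamiltonian cycle (a cycle through all n vertices of G) or G_blue is bipartite. -/
/-- `hasCycle G m` means the simple graph `G` contains a cycle of length `m`. -/
def hasCycle {V : Type*} (G : SimpleGraph V) (m : ℕ) : Prop :=
  ∃ (v : V) (w : G.Walk v v), w.IsCycle ∧ w.length = m

/-!
Red edges are those of `G`, blue edges those of `Gᶜ`. Add the vertices one at a time, keeping
either a red cycle through all vertices added so far or a 2-colouring of the blue graph on them. Since there is no blue triangle, any two blue neighbours of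
the new vertex `v` are joined by a red edge.

If there is a red cycle and `v` has two red neighbours `a`, `b`, either the cycle-predecessor of one
of them is also a red neighbour of `v`, and `v` is inserted between the two, or both predecessors
`a⁻`, `b⁻` are blue neighbours of `v`, hence red-adjacent, and `v a ⋯ b⁻ a⁻ ⋯ b v` is a red cycle
through everything. If `v` has at most one red neighbour, colour by blue adjacency to `v`.

If there is a 2-colouring, its classes `X`, `Y` are red cliques. If `v` has blue neighbours
`x₁ ∈ X`, `y₁ ∈ Y` and red neighbours `x₀ ∈ X`, `y₀ ∈ Y`, then `v x₀ ⋯ x₁ y₁ ⋯ y₀ v` is a red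
cycle through everything. Otherwise either `v` can join a colour class, or all non-blue-neighbours
of `v` lie in one class and colouring by blue adjacency to `v` works.
-/

namespace SimpleGraph

variable {V : Type*} {G : SimpleGraph V}

structure IsCycleList (G : SimpleGraph V) (l : List V) : Prop where
  three_le_length : 3 ≤ l.length
  nodup : l.Nodup
  isChain : l.IsChain G.Adj
  adj_getLast_head : ∀ x ∈ l.getLast?, ∀ y ∈ l.head?, G.Adj x y

theorem adj_of_compl_adj_of_compl_adj (hT : Gᶜ.CliqueFree 3) {v x y : V} (hx : Gᶜ.Adj v x)
    (hy : Gᶜ.Adj v y) (hxy : x ≠ y) : G.Adj x y := by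
  by_contra hn
  exact isIndepSet_neighborSet_of_triangleFree Gᶜ hT v hx hy hxy
    ((compl_adj G x y).2 ⟨hxy, hn⟩)

namespace IsCycleList

variable {l l₁ l₂ : List V} {a b v : V}

theorem hasCycle_length (h : IsCycleList G l) : hasCycle G l.length := by
  obtain ⟨hlen, hnd, hch, hcl⟩ := h
  match l, hlen, hnd, hch, hcl with
  | a :: b :: t, hlen, hnd, hch, hcl =>
    have hch' : (b :: t ++ [a]).IsChain G.Adj :=
      List.isChain_append.2 ⟨hch.of_cons, .singleton a, fun x hx y hy => by
        obtain rfl : a = y := by simpa using hy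
        exact hcl x (by simpa using hx) a rfl⟩
    obtain ⟨p, hsupp, hlen_p⟩ :
        ∃ p : G.Walk b a, p.support = b :: t ++ [a] ∧ p.length = t.length + 1 :=
      ⟨(Walk.ofSupport (b :: t ++ [a]) (List.cons_ne_nil _ _) hch').copy (by simp) (by simp),
        (Walk.support_copy _ _ _).trans (Walk.support_ofSupport _ _),
        (Walk.length_copy _ _ _).trans ((Walk.length_ofSupport _ _).trans (by simp))⟩
    have hp : p.IsPath := by
      rw [Walk.isPath_def, hsupp]
      exact (List.perm_append_singleton a (b :: t)).nodup_iff.2 hnd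
    refine ⟨a, .cons hch.rel p, (Walk.cons_isCycle_iff _ _).2 ⟨hp, fun he => ?_⟩,
      by simp [hlen_p]⟩
    have := hp.length_eq_one_of_mem_edges (Sym2.eq_swap ▸ he)
    simp only [List.length_cons] at hlen
    omega

theorem append_comm (h : IsCycleList G (l₁ ++ l₂)) : IsCycleList G (l₂ ++ l₁) := by
  rcases eq_or_ne l₁ [] with rfl | h₁
  · simpa using h
  rcases eq_or_ne l₂ [] with rfl | h₂
  · simpa using h
  obtain ⟨hlen, hnd, hch, hcl⟩ := h
  obtain ⟨hc₁, hc₂, h₁₂⟩ := List.isChain_append.1 hch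
  refine ⟨by simpa [Nat.add_comm] using hlen, List.nodup_append_comm.1 hnd,
    List.isChain_append.2 ⟨hc₂, hc₁, fun x hx y hy => ?_⟩, fun x hx y hy => ?_⟩
  · exact hcl x (List.mem_getLast?_append_of_mem_getLast? hx)
      y (List.mem_head?_append_of_mem_head? hy)
  · rw [List.getLast?_append_of_ne_nil _ h₁] at hx
    rw [List.head?_append_of_ne_nil _ h₂] at hy
    exact h₁₂ x hx y hy

theorem cons (h : IsCycleList G l) (hv : v ∉ l) (hhead : ∀ x ∈ l.head?, G.Adj v x)
    (hlast : ∀ x ∈ l.getLast?, G.Adj v x) : IsCycleList G (v :: l) := by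
  obtain ⟨hlen, hnd, hch, -⟩ := h
  have hne : l ≠ [] := by rintro rfl; simp at hlen
  refine ⟨hlen.trans (Nat.le_succ _), List.nodup_cons.2 ⟨hv, hnd⟩, List.isChain_cons.2 ⟨hhead, hch⟩,
    fun x hx y hy => ?_⟩
  obtain rfl : v = y := by simpa using hy
  rw [List.getLast?_cons_of_ne_nil hne] at hx
  exact (hlast x hx).symm

theorem cons_append_reverse (h : IsCycleList G (a :: l₁ ++ b :: l₂))
    (hv : v ∉ a :: l₁ ++ b :: l₂) (ha : G.Adj v a) (hb : G.Adj v b)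
    (hlast : ∀ x ∈ (a :: l₁).getLast?, ∀ y ∈ (b :: l₂).getLast?, G.Adj x y) :
    IsCycleList G (v :: (a :: l₁ ++ (b :: l₂).reverse)) := by
  obtain ⟨hlen, hnd, hch, -⟩ := h
  obtain ⟨hc₁, hc₂, -⟩ := List.isChain_append.1 hch
  have hperm : (a :: l₁ ++ (b :: l₂).reverse).Perm (a :: l₁ ++ b :: l₂) :=
    (List.reverse_perm _).append_left _
  refine ⟨?_, List.nodup_cons.2 ⟨fun hm => hv (hperm.subset hm), hperm.nodup_iff.2 hnd⟩,
    List.isChain_cons.2 ⟨by simpa using ha, List.isChain_append.2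
      ⟨hc₁, List.isChain_reverse.2 (hc₂.imp fun _ _ h => h.symm), ?_⟩⟩, ?_⟩
  · simp only [List.length_cons, List.length_append, List.length_reverse] at hlen ⊢
    omega
  · simpa only [List.head?_reverse] using hlast
  · intro x hx y hy
    obtain rfl : v = y := by simpa using hy
    rw [List.getLast?_cons_of_ne_nil (by simp), List.reverse_cons, ← List.append_assoc,
      List.getLast?_append_cons] at hx
    obtain rfl : b = x := by simpa using hx
    exact hb.symm

theorem exists_rotation (h : IsCycleList G l) (ha : a ∈ l) (hb : b ∈ l) (hab : a ≠ b) :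
    ∃ l₁ l₂, IsCycleList G (a :: l₁ ++ b :: l₂) ∧ (a :: l₁ ++ b :: l₂).Perm l := by
  obtain ⟨P, Q, rfl⟩ := List.append_of_mem ha
  have hrot : (a :: Q ++ P).Perm (P ++ a :: Q) := List.perm_append_comm
  have hbQP : b ∈ Q ++ P := by
    simpa [hab.symm] using hrot.symm.subset hb
  obtain ⟨l₁, l₂, hQP⟩ := List.append_of_mem hbQP
  have hsplit : a :: l₁ ++ b :: l₂ = a :: Q ++ P := by simp [hQP]
  exact ⟨l₁, l₂, hsplit ▸ (by simpa using h.append_comm (l₁ := P) (l₂ := a :: Q)),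
    hsplit ▸ hrot⟩

theorem exists_perm_cons (hT : Gᶜ.CliqueFree 3) (h : IsCycleList G l) (hv : v ∉ l)
    (ha : a ∈ l) (hb : b ∈ l) (hab : a ≠ b) (hva : G.Adj v a) (hvb : G.Adj v b) :
    ∃ l', IsCycleList G l' ∧ l'.Perm (v :: l) := by
  obtain ⟨l₁, l₂, hrot, hperm⟩ := h.exists_rotation ha hb hab
  -- `m` precedes `b` and `e` precedes `a` on the cycle
  have hv' : v ∉ a :: l₁ ++ b :: l₂ := fun hm => hv (hperm.subset hm)
  obtain ⟨m, hm, hm_last⟩ : ∃ m ∈ a :: l₁, (a :: l₁).getLast? = some m :=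
    ⟨_, List.getLast_mem (List.cons_ne_nil _ _), List.getLast?_eq_some_getLast _⟩
  obtain ⟨e, he, he_last⟩ : ∃ e ∈ b :: l₂, (b :: l₂).getLast? = some e :=
    ⟨_, List.getLast_mem (List.cons_ne_nil _ _), List.getLast?_eq_some_getLast _⟩
  have he_last' : (a :: l₁ ++ b :: l₂).getLast? = some e := by
    rw [List.getLast?_append_of_ne_nil _ (List.cons_ne_nil _ _), he_last]
  by_cases hvm : G.Adj v m
  · refine ⟨v :: (b :: l₂ ++ a :: l₁), hrot.append_comm.cons ?_ (by simpa using hvb) ?_,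
      (List.perm_append_comm.trans hperm).cons v⟩
    · exact fun hm => hv' (List.perm_append_comm.subset hm)
    · rw [List.getLast?_append_of_ne_nil _ (List.cons_ne_nil _ _), hm_last]
      simpa using hvm
  by_cases hve : G.Adj v e
  · exact ⟨_, hrot.cons hv' (by simpa using hva) (by rw [he_last']; simpa using hve),
      hperm.cons v⟩
  have hml : m ∈ a :: l₁ ++ b :: l₂ := List.mem_append_left _ hm
  have hel : e ∈ a :: l₁ ++ b :: l₂ := List.mem_append_right _ he
  have hme : m ≠ e := fun hme => List.disjoint_of_nodup_append hrot.nodup hm (hme ▸ he)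
  refine ⟨_, hrot.cons_append_reverse hv' hva hvb fun x hx y hy => ?_,
    (((List.reverse_perm _).append_left _).trans hperm).cons v⟩
  obtain rfl : m = x := Option.some_inj.1 (hm_last.symm.trans hx)
  obtain rfl : e = y := Option.some_inj.1 (he_last.symm.trans hy)
  exact adj_of_compl_adj_of_compl_adj hT
    ((compl_adj G v m).2 ⟨(ne_of_mem_of_not_mem hml hv').symm, hvm⟩)
    ((compl_adj G v e).2 ⟨(ne_of_mem_of_not_mem hel hv').symm, hve⟩) hme

end IsCycleList

def TwoColorableOn (H : SimpleGraph V) (s : Finset V) : Prop :=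
  ∃ f : V → Bool, ∀ a ∈ s, ∀ b ∈ s, H.Adj a b → f a ≠ f b

def HasCycleListOn [DecidableEq V] (G : SimpleGraph V) (s : Finset V) : Prop :=
  ∃ l, G.IsCycleList l ∧ l.toFinset = s

section Coloring

variable {H : SimpleGraph V} {s : Finset V} {v : V}

theorem twoColorableOn_insert [DecidableEq V] {f : V → Bool}
    (hf : ∀ a ∈ s, ∀ b ∈ s, H.Adj a b → f a ≠ f b) (c : Bool)
    (hc : ∀ x ∈ s, H.Adj v x → f x ≠ c) : H.TwoColorableOn (insert v s) := by
  refine ⟨Function.update f v c, fun a ha b hb hab => ?_⟩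
  rcases eq_or_ne a v with rfl | hav
  · have hba : b ≠ a := hab.ne.symm
    simpa [hba] using (hc b (Finset.mem_of_mem_insert_of_ne hb hba) hab).symm
  rcases eq_or_ne b v with rfl | hbv
  · simpa [hav] using hc a (Finset.mem_of_mem_insert_of_ne ha hav) hab.symm
  · simpa [hav, hbv] using
      hf a (Finset.mem_of_mem_insert_of_ne ha hav) b (Finset.mem_of_mem_insert_of_ne hb hbv) hab

theorem twoColorableOn_insert_of_forall_not_adj [DecidableEq V] (hT : H.CliqueFree 3)
    (h : ∀ a ∈ s, ∀ b ∈ s, ¬H.Adj v a → ¬H.Adj v b → ¬H.Adj a b) :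
    H.TwoColorableOn (insert v s) := by
  classical
  refine ⟨fun x => decide (H.Adj v x), fun a ha b hb hab heq => ?_⟩
  rw [decide_eq_decide] at heq
  by_cases hva : H.Adj v a
  · exact isIndepSet_neighborSet_of_triangleFree H hT v hva (heq.1 hva) hab.ne hab
  have hvb : ¬H.Adj v b := fun hvb => hva (heq.2 hvb)
  rcases Finset.mem_insert.1 ha with rfl | ha
  · exact hvb hab
  rcases Finset.mem_insert.1 hb with rfl | hb
  · exact hva hab.symm
  exact h a ha b hb hva hvb hab

end Coloring

theorem IsClique.exists_isChain [DecidableEq V] {X : Finset V} (hX : G.IsClique (X : Set V))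
    {a b : V} (ha : a ∈ X) (hb : b ∈ X) (hab : a ≠ b) :
    ∃ p : List V, p.head? = some a ∧ p.getLast? = some b ∧ p.Nodup ∧ p.toFinset = X ∧
      p.IsChain G.Adj := by
  set p := a :: ((X.erase a).erase b).toList ++ [b]
  have hnd : p.Nodup := by simp +contextual [p, hab, List.nodup_append, Finset.nodup_toList]
  have hpX : p.toFinset = X := by
    ext x
    by_cases hxa : x = a <;> by_cases hxb : x = b <;> simp [p, *]
  refine ⟨p, rfl, List.getLast?_concat, hnd, hpX,
    (hnd.pairwise_of_forall_ne fun x hx y hy hxy => hX ?_ ?_ hxy).isChain⟩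
  · simpa [← hpX] using hx
  · simpa [← hpX] using hy

theorem exists_isCycleList_of_isClique [DecidableEq V] {X Y : Finset V} {v x₀ x₁ y₀ y₁ : V}
    (hX : G.IsClique (X : Set V)) (hY : G.IsClique (Y : Set V)) (hXY : Disjoint X Y)
    (hvX : v ∉ X) (hvY : v ∉ Y) (hx₀ : x₀ ∈ X) (hx₁ : x₁ ∈ X) (hy₀ : y₀ ∈ Y) (hy₁ : y₁ ∈ Y)
    (hx : x₀ ≠ x₁) (hy : y₁ ≠ y₀) (hvx₀ : G.Adj v x₀) (hxy : G.Adj x₁ y₁) (hy₀v : G.Adj y₀ v) :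
    G.HasCycleListOn (insert v (X ∪ Y)) := by
  obtain ⟨p, hp_head, hp_last, hp_nodup, hpX, hp_chain⟩ := hX.exists_isChain hx₀ hx₁ hx
  obtain ⟨q, hq_head, hq_last, hq_nodup, hqY, hq_chain⟩ := hY.exists_isChain hy₁ hy₀ hy
  have hp : p ≠ [] := by rintro rfl; cases hp_head
  have hq : q ≠ [] := by rintro rfl; cases hq_head
  have hnd : (v :: (p ++ q)).Nodup := by
    refine List.nodup_cons.2 ⟨?_, List.nodup_append.2 ⟨hp_nodup, hq_nodup, ?_⟩⟩
    · rw [List.mem_append, ← List.mem_toFinset, ← List.mem_toFinset (l := q), hpX, hqY]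
      tauto
    · rintro a ha _ hb rfl
      rw [← List.mem_toFinset, hpX] at ha
      rw [← List.mem_toFinset, hqY] at hb
      exact Finset.disjoint_left.1 hXY ha hb
  have htf : (v :: (p ++ q)).toFinset = insert v (X ∪ Y) := by
    rw [List.toFinset_cons, List.toFinset_append, hpX, hqY]
  refine ⟨v :: (p ++ q), ⟨?_, hnd, ?_, fun x hx y hy => ?_⟩, htf⟩
  · rw [← List.toFinset_card_of_nodup hnd, htf, Nat.succ_le_iff, Finset.two_lt_card]
    exact ⟨v, by simp, x₀, by simp [hx₀], x₁, by simp [hx₁], hvx₀.ne,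
      (ne_of_mem_of_not_mem hx₁ hvX).symm, hx⟩
  · refine List.isChain_cons.2 ⟨?_, List.isChain_append.2 ⟨hp_chain, hq_chain, ?_⟩⟩
    · simpa [List.head?_append_of_ne_nil _ hp, hp_head] using hvx₀
    · simpa [hp_last, hq_head] using hxy
  · obtain rfl : v = y := by simpa using hy
    rw [List.getLast?_cons_of_ne_nil (by simp [hp]), List.getLast?_append_of_ne_nil _ hq,
      hq_last] at hx
    obtain rfl : y₀ = x := by simpa using hx
    exact hy₀v

section Step

variable [DecidableEq V] {v : V}

theorem IsCycleList.hasCycleListOn_insert_or_twoColorableOn {l : List V}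
    (hT : Gᶜ.CliqueFree 3) (hl : G.IsCycleList l) (hv : v ∉ l) :
    G.HasCycleListOn (insert v l.toFinset) ∨ Gᶜ.TwoColorableOn (insert v l.toFinset) := by
  have hred : ∀ x ∈ l, ¬Gᶜ.Adj v x → G.Adj v x := fun x hx hvx => by
    simpa [(ne_of_mem_of_not_mem hx hv).symm] using hvx
  by_cases h₂ : ∃ a ∈ l, ∃ b ∈ l, a ≠ b ∧ G.Adj v a ∧ G.Adj v b
  · obtain ⟨a, ha, b, hb, hab, hva, hvb⟩ := h₂
    obtain ⟨l', hl', hperm⟩ := hl.exists_perm_cons hT hv ha hb hab hva hvb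
    exact .inl ⟨l', hl', by rw [List.toFinset_eq_of_perm _ _ hperm, List.toFinset_cons]⟩
  refine .inr (twoColorableOn_insert_of_forall_not_adj hT fun a ha b hb hva hvb => ?_)
  rw [List.mem_toFinset] at ha hb
  rcases eq_or_ne a b with rfl | hab
  · exact Gᶜ.irrefl
  · exact fun _ => h₂ ⟨a, ha, b, hb, hab, hred a ha hva, hred b hb hvb⟩

theorem hasCycleListOn_insert_of_coloring {s : Finset V} {f : V → Bool} (hT : Gᶜ.CliqueFree 3)
    (hf : ∀ a ∈ s, ∀ b ∈ s, Gᶜ.Adj a b → f a ≠ f b) (hv : v ∉ s)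
    (hblue : ∀ c, ∃ x ∈ s, Gᶜ.Adj v x ∧ f x = c) (hred : ∀ c, ∃ x ∈ s, G.Adj v x ∧ f x = c) :
    G.HasCycleListOn (insert v s) := by
  have hclique : ∀ c, G.IsClique (s.filter (f · = c) : Set V) := by
    intro c x hx y hy hxy
    simp only [Finset.coe_filter, Set.mem_ofPred_eq] at hx hy
    by_contra hn
    exact hf x hx.1 y hy.1 ((compl_adj G x y).2 ⟨hxy, hn⟩) (hx.2.trans hy.2.symm)
  obtain ⟨x₀, hx₀, hvx₀, hfx₀⟩ := hred false
  obtain ⟨y₀, hy₀, hvy₀, hfy₀⟩ := hred true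
  obtain ⟨x₁, hx₁, hvx₁, hfx₁⟩ := hblue false
  obtain ⟨y₁, hy₁, hvy₁, hfy₁⟩ := hblue true
  have hs : s.filter (f · = false) ∪ s.filter (f · = true) = s := by
    ext x; cases h : f x <;> simp [h]
  have hxy : G.Adj x₁ y₁ := adj_of_compl_adj_of_compl_adj hT hvx₁ hvy₁ (by
    rintro rfl
    simp [hfx₁] at hfy₁)
  refine hs ▸ exists_isCycleList_of_isClique (hclique false) (hclique true)
    (Finset.disjoint_filter.2 fun x _ h => by simp [h])
    (fun h => hv (Finset.mem_filter.1 h).1) (fun h => hv (Finset.mem_filter.1 h).1)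
    (Finset.mem_filter.2 ⟨hx₀, hfx₀⟩) (Finset.mem_filter.2 ⟨hx₁, hfx₁⟩)
    (Finset.mem_filter.2 ⟨hy₀, hfy₀⟩) (Finset.mem_filter.2 ⟨hy₁, hfy₁⟩) ?_ ?_ hvx₀ hxy hvy₀.symm
  · rintro rfl
    exact ((compl_adj G v x₀).1 hvx₁).2 hvx₀
  · rintro rfl
    exact ((compl_adj G v y₁).1 hvy₁).2 hvy₀

theorem hasCycleListOn_insert_or_twoColorableOn_of_coloring {s : Finset V} {f : V → Bool}
    (hT : Gᶜ.CliqueFree 3) (hf : ∀ a ∈ s, ∀ b ∈ s, Gᶜ.Adj a b → f a ≠ f b) (hv : v ∉ s) :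
    G.HasCycleListOn (insert v s) ∨ Gᶜ.TwoColorableOn (insert v s) := by
  by_cases hblue : ∃ c, ∀ x ∈ s, Gᶜ.Adj v x → f x ≠ c
  · obtain ⟨c, hc⟩ := hblue
    exact .inr (twoColorableOn_insert hf c hc)
  push Not at hblue
  by_cases hred : ∀ c, ∃ x ∈ s, G.Adj v x ∧ f x = c
  · exact .inl (hasCycleListOn_insert_of_coloring hT hf hv hblue hred)
  push Not at hred
  obtain ⟨c, hc⟩ := hred
  refine .inr (twoColorableOn_insert_of_forall_not_adj hT fun a ha b hb hva hvb hab => ?_)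
  have hnot_c : ∀ x ∈ s, ¬Gᶜ.Adj v x → f x = !c := fun x hx hvx =>
    Bool.eq_not_iff.2 (hc x hx (by simpa [(ne_of_mem_of_not_mem hx hv).symm] using hvx))
  exact hf a ha b hb hab ((hnot_c a ha hva).trans (hnot_c b hb hvb).symm)

theorem hasCycleListOn_or_twoColorableOn (hT : Gᶜ.CliqueFree 3) (s : Finset V) :
    G.HasCycleListOn s ∨ Gᶜ.TwoColorableOn s := by
  induction s using Finset.induction_on with
  | empty => exact .inr ⟨fun _ => true, by simp⟩
  | insert v s hv ih =>
    rcases ih with ⟨l, hl, rfl⟩ | ⟨f, hf⟩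
    · exact hl.hasCycleListOn_insert_or_twoColorableOn hT (by simpa using hv)
    · exact hasCycleListOn_insert_or_twoColorableOn_of_coloring hT hf hv

end Step

end SimpleGraph

/-- Lemma 3.7: a red-blue graph (red subgraph `G`, blue subgraph `Gᶜ`) on `n`
vertices without blue 3-cycles is red hamiltonian or blue bipartite. -/
theorem stmt_1 {V : Type*} [Fintype V] (G : SimpleGraph V)
    (h : ¬ hasCycle Gᶜ 3) :
    hasCycle G (Fintype.card V) ∨ Gᶜ.Colorable 2 := by
  classical
  have hT : Gᶜ.CliqueFree 3 := fun t ht =>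
    h (SimpleGraph.is3Clique_iff_exists_cycle_length_three.1 ⟨t, ht⟩)
  rcases SimpleGraph.hasCycleListOn_or_twoColorableOn hT Finset.univ with ⟨l, hl, hs⟩ | ⟨f, hf⟩
  · have hlen : l.length = Fintype.card V := by
      rw [← List.toFinset_card_of_nodup hl.nodup, hs, Finset.card_univ]
    exact .inl (hlen ▸ hl.hasCycle_length)
  · exact .inr (SimpleGraph.Coloring.mk f fun hab =>
      hf _ (Finset.mem_univ _) _ (Finset.mem_univ _) hab).colorable
end

section
/- Let G be a red-blue graph and let n ≥ 6. Suppose G contains an n-cycle C = x_1 x_2 ⋯ x_n x_1 (whose edges may be of either colour) all of whose chords are red, where a chord of C is an edge x_i x_{i+j} with 2 ≤ j ≤ n − 2 (indices taken modulo n). Then the red subgraph induced on the vertex set of C is pancyclic, i.e., it contains cycles of every length from 3 to n. -/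
/-!
The red chords of `C = x_0 ⋯ x_{n-1}` contain the complement of the cycle `C_n`, so it suffices to
find an `l`-cycle in that complement for every `3 ≤ l ≤ n`. For `l = 3, 4` take `x_0 x_2 x_4` and
`x_0 x_3 x_1 x_4`. For `5 ≤ l`, list the first `⌈l/2⌉` even positions and then the first `⌊l/2⌋`
odd ones; this closes up through chords unless `l = n` is even, where the odd positions are
reordered as `1, n-1, n-3, …, 3`.
-/

open SimpleGraph

theorem hasCycle_of_injOn {W : Type*} {H : SimpleGraph W} {l : ℕ} (hl : 3 ≤ l) {f : ℕ → W}
    (hf : Set.InjOn f (Set.Iio l)) (hstep : ∀ i, i + 1 < l → H.Adj (f i) (f (i + 1)))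
    (hclose : H.Adj (f (l - 1)) (f 0)) : hasCycle H l := by
  have hback : ∀ u v : Fin l, (u - v : Fin l).val = 1 → H.Adj (f u) (f v) := by
    intro u v h
    rcases le_or_gt v u with hle | hlt
    · rw [Fin.coe_sub_iff_le.mpr hle] at h
      rw [show (u : ℕ) = v + 1 by omega]
      exact (hstep v (by omega)).symm
    · rw [Fin.coe_sub_iff_lt.mpr hlt] at h
      rw [show (u : ℕ) = 0 by omega, show (v : ℕ) = l - 1 by omega]
      exact hclose.symm
  refine (cycleGraph_isContained_iff (by omega)).mp ⟨⟨⟨fun i : Fin l => f i, ?_⟩, ?_⟩⟩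
  · intro u v huv
    rcases cycleGraph_adj'.mp huv with h | h
    · exact hback u v h
    · exact (hback v u h).symm
  · intro u v huv
    exact Fin.ext (hf u.isLt v.isLt huv)

/-- Positions `u, v` of an `n`-cycle that are neither equal nor cyclically consecutive. -/
def IsChord (n u v : ℕ) : Prop :=
  u + 2 ≤ v ∧ v + 2 ≤ u + n ∨ v + 2 ≤ u ∧ u + 2 ≤ v + n

/-- The `l`-cycle `a 0 ⋯ a (l-1)` in the complement of the `n`-cycle on positions `0, …, n-1`. -/
def IsChordCycle (n l : ℕ) (a : ℕ → ℕ) : Prop :=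
  (∀ i < l, a i < n) ∧ Set.InjOn a (Set.Iio l) ∧
    (∀ i, i + 1 < l → IsChord n (a i) (a (i + 1))) ∧ IsChord n (a (l - 1)) (a 0)

theorem hasCycle_of_isChordCycle {W : Type*} {H : SimpleGraph W} {n l : ℕ} {y : ℕ → W}
    (hy : Set.InjOn y (Set.Iio n))
    (hchord : ∀ u v, u < n → v < n → IsChord n u v → H.Adj (y u) (y v))
    (hl : 3 ≤ l) {a : ℕ → ℕ} (ha : IsChordCycle n l a) : hasCycle H l := by
  obtain ⟨hlt, hinj, hstep, hclose⟩ := ha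
  refine hasCycle_of_injOn hl (f := y ∘ a) (hy.comp hinj fun i hi => hlt i hi) ?_ ?_
  · intro i hi
    exact hchord _ _ (hlt i (by omega)) (hlt (i + 1) hi) (hstep i hi)
  · exact hchord _ _ (hlt (l - 1) (by omega)) (hlt 0 (by omega)) hclose

theorem isChordCycle_three {n : ℕ} (hn : 6 ≤ n) : IsChordCycle n 3 (2 * ·) := by
  refine ⟨fun i hi => ?_, fun i hi j hj hij => ?_, fun i hi => ?_, ?_⟩ <;>
    simp only [Set.mem_Iio, IsChord] at * <;> omega

theorem isChordCycle_four {n : ℕ} (hn : 6 ≤ n) :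
    IsChordCycle n 4 fun i => if i = 0 then 0 else if i = 1 then 3 else if i = 2 then 1 else 4 := by
  refine ⟨fun i hi => ?_, fun i hi j hj hij => ?_, fun i hi => ?_, ?_⟩ <;>
    simp only [Set.mem_Iio, IsChord] at * <;> split_ifs at * <;> omega

theorem isChordCycle_evens_then_odds {n l : ℕ} (hl : 5 ≤ l) (hln : l < n ∨ l % 2 = 1 ∧ l ≤ n) :
    IsChordCycle n l fun i => if i < (l + 1) / 2 then 2 * i else 2 * (i - (l + 1) / 2) + 1 := by
  refine ⟨fun i hi => ?_, fun i hi j hj hij => ?_, fun i hi => ?_, ?_⟩ <;>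
    simp only [Set.mem_Iio, IsChord] at * <;> split_ifs at * <;> omega

theorem isChordCycle_even_hamiltonian {n : ℕ} (hn : 6 ≤ n) (heven : n % 2 = 0) :
    IsChordCycle n n fun i =>
      if i < n / 2 then 2 * i else if i = n / 2 then 1 else 2 * n + 1 - 2 * i := by
  refine ⟨fun i hi => ?_, fun i hi j hj hij => ?_, fun i hi => ?_, ?_⟩ <;>
    simp only [Set.mem_Iio, IsChord] at * <;> split_ifs at * <;> omega

theorem exists_isChordCycle {n l : ℕ} (hn : 6 ≤ n) (hl : 3 ≤ l) (hln : l ≤ n) :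
    ∃ a, IsChordCycle n l a := by
  obtain rfl | rfl | hl5 : l = 3 ∨ l = 4 ∨ 5 ≤ l := by omega
  · exact ⟨_, isChordCycle_three hn⟩
  · exact ⟨_, isChordCycle_four hn⟩
  by_cases hham : l = n ∧ n % 2 = 0
  · obtain ⟨rfl, heven⟩ := hham
    exact ⟨_, isChordCycle_even_hamiltonian hn heven⟩
  · exact ⟨_, isChordCycle_evens_then_odds hl5 (by omega)⟩

theorem adj_of_isChord {V : Type*} {G : SimpleGraph V} {n : ℕ} {x : ZMod n → V}
    (hchord : ∀ (i : ZMod n) (j : ℕ), 2 ≤ j → j ≤ n - 2 → G.Adj (x i) (x (i + (j : ZMod n))))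
    {u v : ℕ} (huv : IsChord n u v) : G.Adj (x u) (x v) := by
  have hshift : ∀ j : ℕ, u ≤ j → x (u + ((j - u : ℕ) : ZMod n)) = x j := fun j hj => by
    rw [← Nat.cast_add, Nat.add_sub_cancel' hj]
  rcases huv with ⟨h₁, h₂⟩ | ⟨h₁, h₂⟩
  · simpa only [hshift v (by omega)] using hchord u (v - u) (by omega) (by omega)
  · simpa only [hshift (v + n) (by omega), Nat.cast_add, ZMod.natCast_self, add_zero]
      using hchord u (v + n - u) (by omega) (by omega)

theorem stmt_2_general {V : Type*} (G : SimpleGraph V) (n : ℕ) (hn : 6 ≤ n)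
    (x : ZMod n → V) (hinj : Function.Injective x)
    (hchord : ∀ (i : ZMod n) (j : ℕ), 2 ≤ j → j ≤ n - 2 →
      G.Adj (x i) (x (i + (j : ZMod n)))) :
    ∀ l, 3 ≤ l → l ≤ n → hasCycle (G.induce (Set.range x)) l := by
  intro l hl hln
  obtain ⟨a, ha⟩ := exists_isChordCycle hn hl hln
  refine hasCycle_of_isChordCycle (y := fun u : ℕ => ⟨x u, u, rfl⟩) ?_
    (fun u v _ _ huv => adj_of_isChord hchord huv) hl ha
  intro u hu v hv huv
  exact CharP.natCast_injOn_Iio (ZMod n) n hu hv (hinj (congrArg Subtype.val huv))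

/-- Lemma 3.8: if a red-blue graph (red subgraph `G`) contains an `n`-cycle
`x_1 x_2 ⋯ x_n x_1` (`n ≥ 6`, edges of either colour) all of whose chords
`x_i x_{i+j}` (`2 ≤ j ≤ n − 2`, indices mod `n`) are red, then the red subgraph
induced on the vertex set of the cycle is pancyclic. -/
theorem stmt_2 {V : Type*} [Fintype V] (G : SimpleGraph V) (n : ℕ) (hn : 6 ≤ n)
    (x : ZMod n → V) (hinj : Function.Injective x)
    (hchord : ∀ (i : ZMod n) (j : ℕ), 2 ≤ j → j ≤ n - 2 →
      G.Adj (x i) (x (i + (j : ZMod n)))) :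
    ∀ l, 3 ≤ l → l ≤ n → hasCycle (G.induce (Set.range x)) l :=
  stmt_2_general G n hn x hinj hchord
end

section
/- Let G be a red-blue graph such that G_blue contains no 5-cycle and G_red contains a cycle of length n, where n ≥ 5. Then G_red contains a cycle of length n − 1 or a cycle of length n − 2. -/
open SimpleGraph

section

variable {V : Type*} {G : SimpleGraph V}

lemma Fin.eq_succ_or_wrap_of_val_sub_eq_one {m : ℕ} {x y : Fin m} (h : (y - x).val = 1) :
    y.val = x.val + 1 ∨ (x.val = m - 1 ∧ y.val = 0) := by
  rcases le_or_gt x y with hxy | hxy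
  · rw [Fin.coe_sub_iff_le.mpr hxy] at h
    omega
  · rw [Fin.coe_sub_iff_lt.mpr hxy] at h
    omega

lemma hasCycle_of_injOn_s3 {m : ℕ} (hm : 3 ≤ m) (g : ℕ → V) (hinj : Set.InjOn g (Set.Iio m))
    (hadj : ∀ j, j + 1 < m → G.Adj (g j) (g (j + 1))) (hclose : G.Adj (g (m - 1)) (g 0)) :
    hasCycle G m := by
  have hsucc {x y : Fin m} (h : (y - x).val = 1) : G.Adj (g x) (g y) := by
    rcases Fin.eq_succ_or_wrap_of_val_sub_eq_one h with hy | ⟨hx, hy⟩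
    · rw [hy]
      exact hadj x (by omega)
    · rw [hx, hy]
      exact hclose
  refine (cycleGraph_isContained_iff (by omega)).mp
    ⟨⟨⟨fun x => g x, fun h => ?_⟩, fun x y h => Fin.ext (hinj x.isLt y.isLt h)⟩⟩
  rcases cycleGraph_adj'.mp h with h | h
  · exact (hsucc h).symm
  · exact hsucc h

lemma SimpleGraph.Walk.getVert_mod_length {u : V} (w : G.Walk u u) {j : ℕ} (hj : j ≤ w.length) :
    w.getVert (j % w.length) = w.getVert j := by
  rcases hj.lt_or_eq with hj | rfl
  · rw [Nat.mod_eq_of_lt hj]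
  · rw [Nat.mod_self, Walk.getVert_zero, Walk.getVert_length]

lemma exists_periodic_of_hasCycle {n : ℕ} (h : hasCycle G n) :
    ∃ v : ℕ → V, Function.Periodic v n ∧ (∀ i, G.Adj (v i) (v (i + 1))) ∧
      ∀ i, Set.InjOn (fun j => v (i + j)) (Set.Iio n) := by
  obtain ⟨u, w, hw, rfl⟩ := h
  have hpos : 0 < w.length := by have := hw.three_le_length; omega
  refine ⟨fun i => w.getVert (i % w.length), fun i => by simp, fun i => ?_,
    fun i a ha b hb h => ?_⟩
  · dsimp only
    rw [← Nat.mod_add_mod, w.getVert_mod_length (Nat.mod_lt i hpos)]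
    exact w.adj_getVert_succ (Nat.mod_lt i hpos)
  · have hmod : (i + a) % w.length = (i + b) % w.length :=
      hw.getVert_injOn' (Nat.le_sub_one_of_lt (Nat.mod_lt _ hpos))
        (Nat.le_sub_one_of_lt (Nat.mod_lt _ hpos)) h
    have hab : a ≡ b [MOD w.length] := Nat.ModEq.add_left_cancel' i hmod
    rwa [Nat.ModEq, Nat.mod_eq_of_lt ha, Nat.mod_eq_of_lt hb] at hab

lemma hasCycle_sub_of_chord {n k : ℕ} (hk : k + 3 ≤ n) {v : ℕ → V}
    (hper : Function.Periodic v n) (hadj : ∀ i, G.Adj (v i) (v (i + 1)))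
    (hinj : ∀ i, Set.InjOn (fun j => v (i + j)) (Set.Iio n)) {i : ℕ}
    (hchord : G.Adj (v i) (v (i + (k + 1)))) : hasCycle G (n - k) := by
  refine hasCycle_of_injOn_s3 (by omega) (fun j => v (i + (k + 1) + j)) ?_ (fun j _ => hadj _) ?_
  · exact (hinj _).mono (Set.Iio_subset_Iio (Nat.sub_le n k))
  · have : i + (k + 1) + (n - k - 1) = i + n := by omega
    simpa only [this, hper i, add_zero] using hchord

lemma hasCycle_compl_five {v : ℕ → V} (hinj : Set.InjOn v (Set.Iio 5))
    (h2 : ∀ i, ¬G.Adj (v i) (v (i + 2))) (h3 : ∀ i, ¬G.Adj (v i) (v (i + 3))) :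
    hasCycle Gᶜ 5 := by
  have hblue : ∀ a b, a < 5 → b < 5 → (b = a + 2 ∨ b = a + 3 ∨ a = b + 2 ∨ a = b + 3) →
      Gᶜ.Adj (v a) (v b) := by
    intro a b ha hb hab
    refine ⟨fun h => ?_, ?_⟩
    · have := hinj (Set.mem_Iio.mpr ha) (Set.mem_Iio.mpr hb) h
      omega
    · rcases hab with rfl | rfl | rfl | rfl
      · exact h2 a
      · exact h3 a
      · exact fun h => h2 b h.symm
      · exact fun h => h3 b h.symm
  -- `2 * j % 5` runs through 0, 2, 4, 1, 3, whose cyclic neighbours differ by 2 or 3.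
  refine hasCycle_of_injOn_s3 (by norm_num) (fun j => v (2 * j % 5)) ?_ ?_ ?_
  · intro a ha b hb h
    have := hinj (Set.mem_Iio.mpr (Nat.mod_lt _ (by norm_num)))
      (Set.mem_Iio.mpr (Nat.mod_lt _ (by norm_num))) h
    simp only [Set.mem_Iio] at ha hb
    omega
  · intro j hj
    exact hblue _ _ (Nat.mod_lt _ (by norm_num)) (Nat.mod_lt _ (by norm_num)) (by omega)
  · exact hblue 3 0 (by norm_num) (by norm_num) (by norm_num)

end

theorem stmt_3_general {V : Type*} (G : SimpleGraph V) (n : ℕ) (hn : 5 ≤ n)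
    (h5 : ¬ hasCycle Gᶜ 5) (hcyc : hasCycle G n) :
    hasCycle G (n - 1) ∨ hasCycle G (n - 2) := by
  obtain ⟨v, hper, hadj, hinj⟩ := exists_periodic_of_hasCycle hcyc
  by_cases h2 : ∃ i, G.Adj (v i) (v (i + 2))
  · obtain ⟨i, hi⟩ := h2
    exact .inl (hasCycle_sub_of_chord (by omega) hper hadj hinj hi)
  by_cases h3 : ∃ i, G.Adj (v i) (v (i + 3))
  · obtain ⟨i, hi⟩ := h3
    exact .inr (hasCycle_sub_of_chord (by omega) hper hadj hinj hi)
  push Not at h2 h3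
  have hinj5 : Set.InjOn v (Set.Iio 5) := by
    simpa using (hinj 0).mono (Set.Iio_subset_Iio hn)
  exact absurd (hasCycle_compl_five hinj5 h2 h3) h5

/-- Lemma 3.11: if the blue subgraph `Gᶜ` has no 5-cycle and the red subgraph `G`
has an `n`-cycle, `n ≥ 5`, then `G` has an `(n−1)`-cycle or an `(n−2)`-cycle. -/
theorem stmt_3 {V : Type*} [Fintype V] (G : SimpleGraph V) (n : ℕ) (hn : 5 ≤ n)
    (h5 : ¬ hasCycle Gᶜ 5) (hcyc : hasCycle G n) :
    hasCycle G (n - 1) ∨ hasCycle G (n - 2) :=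
  stmt_3_general G n hn h5 hcyc
end

section
/- Let G be a red-blue graph such that G_blue contains no 5-cycle, let C = x_1 x_2 ⋯ x_n x_1 be a red n-cycle in G, and let x be a vertex of G not on C. If there exists j with j = 1, or 3 ≤ j ≤ n − 3, or j = n − 1, such that for some i the edges x x_i and x x_{i+j} are both red (indices taken modulo n), then G_red contains a cycle of length n + 1. -/
open SimpleGraph

section

variable {V : Type*} {G : SimpleGraph V}

theorem hasCycle_of_isChain {v : V} {l : List V} (hchain : l.IsChain G.Adj)
    (hnd : (v :: l).Nodup) (hlen : 2 ≤ l.length)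
    (hhead : ∀ u ∈ l.head?, G.Adj v u) (hlast : ∀ w ∈ l.getLast?, G.Adj v w) :
    hasCycle G (l.length + 1) := by
  obtain ⟨hv, hnd⟩ := List.nodup_cons.1 hnd
  have hne : l ≠ [] := List.ne_nil_of_length_pos (by omega)
  let p := Walk.ofSupport l hne hchain
  have hp : p.IsPath := Walk.IsPath.mk' (by simpa [p] using hnd)
  have hback := hlast _ (List.getLast_mem_getLast? hne)
  refine ⟨v, .cons (hhead _ (List.head_mem_head? hne)) (p.concat hback.symm), ?_, ?_⟩
  · rw [Walk.isCycle_iff_isPath_tail_and_le_length]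
    refine ⟨?_, ?_⟩
    · simpa using hp.concat (by simpa [p] using hv) hback.symm
    · simp [p]; omega
  · simp [p]; omega

theorem hasCycle_compl_five_s5 {a b c d e : V} (hnd : [a, b, c, d, e].Nodup)
    (hab : ¬G.Adj a b) (hbc : ¬G.Adj b c) (hcd : ¬G.Adj c d) (hde : ¬G.Adj d e)
    (hea : ¬G.Adj e a) : hasCycle Gᶜ 5 := by
  refine hasCycle_of_isChain (v := a) (l := [b, c, d, e]) ?_ hnd (by simp) ?_ ?_ <;>
    simp_all [compl_adj, adj_comm]

def arc (a b : ℕ) : List ℕ := List.range' a (b + 1 - a)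

@[simp] theorem mem_arc {a b k : ℕ} : k ∈ arc a b ↔ a ≤ k ∧ k ≤ b := by
  simp [arc]; omega

theorem nodup_arc (a b : ℕ) : (arc a b).Nodup := List.nodup_range' ..

theorem head?_arc {a b : ℕ} (h : a ≤ b) : (arc a b).head? = some a := by
  simp [arc, List.head?_range']; omega

theorem getLast?_arc {a b : ℕ} (h : a ≤ b) : (arc a b).getLast? = some b := by
  simp [arc, List.getLast?_range']; omega

theorem isChain_arc (a b : ℕ) : (arc a b).IsChain fun k l => l = k + 1 := List.isChain_range' ..

/-- `z` runs periodically around an `n`-cycle of `G`, whose vertices are `z 0, …, z (n - 1)`. -/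
structure IsCyclicSeq (G : SimpleGraph V) (n : ℕ) (z : ℕ → V) : Prop where
  injOn : Set.InjOn z (Set.Iio n)
  adj : ∀ k, G.Adj (z k) (z (k + 1))
  periodic : Function.Periodic z n

theorem isCyclicSeq_of_zmod {n : ℕ} {x : ZMod n → V} (hinj : Function.Injective x)
    (hcyc : ∀ i, G.Adj (x i) (x (i + 1))) (i : ZMod n) :
    IsCyclicSeq G n fun k => x (i + k) where
  injOn k hk l hl h := by
    simpa [ZMod.natCast_eq_natCast_iff', Nat.mod_eq_of_lt hk, Nat.mod_eq_of_lt hl] using hinj h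
  adj k := by simpa [add_assoc] using hcyc (i + k)
  periodic k := by simp

namespace IsCyclicSeq

variable {n : ℕ} {z : ℕ → V} {v : V}

theorem isChain_arc (hz : IsCyclicSeq G n z) (a b : ℕ) :
    (arc a b).IsChain fun k l => G.Adj (z k) (z l) :=
  (_root_.isChain_arc a b).imp fun k _ h => by subst h; exact hz.adj k

theorem isChain_reverse_arc (hz : IsCyclicSeq G n z) (a b : ℕ) :
    (arc a b).reverse.IsChain fun k l => G.Adj (z k) (z l) :=
  List.isChain_reverse.2 <| (hz.isChain_arc a b).imp fun _ _ h => h.symm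

theorem adj_zero_pred (hz : IsCyclicSeq G n z) (hn : 0 < n) : G.Adj (z 0) (z (n - 1)) := by
  simpa [Nat.sub_add_cancel hn, zero_add n ▸ hz.periodic 0] using (hz.adj (n - 1)).symm

theorem nodup_cons_map (hz : IsCyclicSeq G n z) (hv : ∀ k < n, z k ≠ v) {L : List ℕ}
    (hL : L.Nodup) (hlt : ∀ k ∈ L, k < n) : (v :: L.map z).Nodup :=
  List.nodup_cons.2 ⟨by simpa using fun k hk => hv k (hlt k hk),
    hL.map_on fun _ ha _ hb h => hz.injOn (hlt _ ha) (hlt _ hb) h⟩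

theorem hasCycle_succ_of_isChain (hz : IsCyclicSeq G n z) (hn : 2 ≤ n) (hv : ∀ k < n, z k ≠ v)
    {L : List ℕ} (hnd : L.Nodup) (hmem : ∀ k, k ∈ L ↔ k < n)
    (hchain : L.IsChain fun k l => G.Adj (z k) (z l))
    (hhead : ∀ k ∈ L.head?, G.Adj v (z k)) (hlast : ∀ k ∈ L.getLast?, G.Adj v (z k)) :
    hasCycle G (n + 1) := by
  have hL : L.Perm (List.range n) :=
    (List.perm_ext_iff_of_nodup hnd List.nodup_range).2 (by simpa)
  simpa [hL.length_eq] using hasCycle_of_isChain ((List.isChain_map z).2 hchain)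
    (hz.nodup_cons_map hv hnd fun k hk => (hmem k).1 hk) (by simpa [hL.length_eq])
    (by simpa using hhead) (by simpa using hlast)

theorem hasCycle_succ_of_adj_adj_succ (hz : IsCyclicSeq G n z) (hv : ∀ k < n, z k ≠ v) {s : ℕ}
    (hs : s + 1 < n) (h₁ : G.Adj v (z s)) (h₂ : G.Adj v (z (s + 1))) : hasCycle G (n + 1) := by
  refine hz.hasCycle_succ_of_isChain (by omega) hv (L := arc (s + 1) (n - 1) ++ arc 0 s)
    ?_ ?_ ?_ ?_ ?_ <;>
  simp (disch := omega) [List.nodup_append, nodup_arc, List.isChain_append, head?_arc,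
    getLast?_arc, hz.isChain_arc, (hz.adj_zero_pred _).symm, h₁, h₂] <;> grind

theorem hasCycle_succ_of_adj_pred_adj_zero (hz : IsCyclicSeq G n z) (hn : 2 ≤ n)
    (hv : ∀ k < n, z k ≠ v) (h₁ : G.Adj v (z (n - 1))) (h₂ : G.Adj v (z 0)) :
    hasCycle G (n + 1) := by
  refine hz.hasCycle_succ_of_isChain hn hv (L := arc 0 (n - 1)) (nodup_arc ..) ?_
    (hz.isChain_arc ..) ?_ ?_
  · simp; omega
  · simp (disch := omega) [head?_arc, h₂]
  · simp (disch := omega) [getLast?_arc, h₁]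

theorem hasCycle_succ_of_adj_succ_succ (hz : IsCyclicSeq G n z) (hv : ∀ k < n, z k ≠ v)
    {j : ℕ} (hj : 1 ≤ j) (hjn : j + 2 ≤ n) (h₀ : G.Adj v (z 0)) (hⱼ : G.Adj v (z j))
    (hchord : G.Adj (z 1) (z (j + 1))) : hasCycle G (n + 1) := by
  refine hz.hasCycle_succ_of_isChain (by omega) hv
    (L := 0 :: (arc (j + 1) (n - 1)).reverse ++ arc 1 j) ?_ ?_ ?_ ?_ ?_ <;>
  simp (disch := omega) [List.nodup_append, nodup_arc, List.isChain_cons, List.isChain_append,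
    List.getLast?_cons, head?_arc, getLast?_arc, hz.isChain_arc, hz.isChain_reverse_arc,
    hz.adj_zero_pred, h₀, hⱼ, hchord.symm] <;> grind

theorem hasCycle_succ_of_adj_pred_pred (hz : IsCyclicSeq G n z) (hv : ∀ k < n, z k ≠ v)
    {j : ℕ} (hj : 1 ≤ j) (hjn : j + 2 ≤ n) (h₀ : G.Adj v (z 0)) (hⱼ : G.Adj v (z j))
    (hchord : G.Adj (z (j - 1)) (z (n - 1))) : hasCycle G (n + 1) := by
  refine hz.hasCycle_succ_of_isChain (by omega) hv
    (L := arc j (n - 1) ++ (arc 0 (j - 1)).reverse) ?_ ?_ ?_ ?_ ?_ <;>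
  simp (disch := omega) [List.nodup_append, nodup_arc, List.isChain_append,
    head?_arc, getLast?_arc, hz.isChain_arc, hz.isChain_reverse_arc,
    h₀, hⱼ, hchord.symm] <;> grind

theorem hasCycle_succ_of_chords (hz : IsCyclicSeq G n z) (hv : ∀ k < n, z k ≠ v)
    {j : ℕ} (hj : 3 ≤ j) (hjn : j + 3 ≤ n) (h₀ : G.Adj v (z 0)) (hⱼ : G.Adj v (z j))
    (h₁ : G.Adj (z 1) (z (n - 1))) (h₂ : G.Adj (z 1) (z (j - 1)))
    (h₃ : G.Adj (z (j - 1)) (z (j + 1)))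
    (h : G.Adj (z 0) (z 2) ∨ G.Adj (z 2) (z j) ∨ G.Adj (z 1) (z j) ∨
      G.Adj (z 0) (z (j + 1))) :
    hasCycle G (n + 1) := by
  rcases h with h | h | h | h
  · refine hz.hasCycle_succ_of_isChain (by omega) hv
      (L := 0 :: arc 2 (j - 1) ++ 1 :: (arc j (n - 1)).reverse) ?_ ?_ ?_ ?_ ?_ <;>
    simp (disch := omega) [List.nodup_append, nodup_arc, List.isChain_cons, List.isChain_append,
      List.getLast?_cons, head?_arc, getLast?_arc, hz.isChain_arc, hz.isChain_reverse_arc,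
      h₀, hⱼ, h, h₁, h₂.symm] <;> grind
  · refine hz.hasCycle_succ_of_isChain (by omega) hv
      (L := 0 :: 1 :: (arc (j + 1) (n - 1)).reverse ++ (arc 2 (j - 1)).reverse ++ [j])
      ?_ ?_ ?_ ?_ ?_ <;>
    simp (disch := omega) [List.nodup_append, nodup_arc, List.isChain_cons, List.isChain_append,
      List.getLast?_cons, head?_arc, getLast?_arc, hz.isChain_reverse_arc,
      h₀, hⱼ, hz.adj 0, h₁, h₃.symm, h] <;> grind
  · refine hz.hasCycle_succ_of_isChain (by omega) hv
      (L := 0 :: (arc (j + 1) (n - 1)).reverse ++ (arc 1 (j - 1)).reverse ++ [j])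
      ?_ ?_ ?_ ?_ ?_ <;>
    simp (disch := omega) [List.nodup_append, nodup_arc, List.isChain_cons, List.isChain_append,
      List.getLast?_cons, head?_arc, getLast?_arc, hz.isChain_reverse_arc,
      h₀, hⱼ, hz.adj_zero_pred, h₃.symm, h] <;> grind
  · refine hz.hasCycle_succ_of_isChain (by omega) hv
      (L := 0 :: arc (j + 1) (n - 1) ++ arc 1 j) ?_ ?_ ?_ ?_ ?_ <;>
    simp (disch := omega) [List.nodup_append, nodup_arc, List.isChain_cons, List.isChain_append,
      List.getLast?_cons, head?_arc, getLast?_arc, hz.isChain_arc,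
      h₀, hⱼ, h, h₁.symm] <;> grind

theorem hasCycle_succ_of_adj_zero_adj (hz : IsCyclicSeq G n z) (h5 : ¬hasCycle Gᶜ 5)
    (hv : ∀ k < n, z k ≠ v) {j : ℕ} (hj : 3 ≤ j) (hjn : j + 3 ≤ n)
    (h₀ : G.Adj v (z 0)) (hⱼ : G.Adj v (z j)) : hasCycle G (n + 1) := by
  by_contra hC
  have hnd (L : List ℕ) (hL : L.Nodup := by simp; omega)
      (hlt : ∀ k ∈ L, k < n := by simp; omega) : (v :: L.map z).Nodup :=
    hz.nodup_cons_map hv hL hlt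
  have hva : ¬G.Adj v (z 1) := fun h =>
    hC (hz.hasCycle_succ_of_adj_adj_succ hv (s := 0) (by omega) h₀ h)
  have hvb : ¬G.Adj v (z (n - 1)) := fun h =>
    hC (hz.hasCycle_succ_of_adj_pred_adj_zero (by omega) hv h h₀)
  have hvc : ¬G.Adj v (z (j + 1)) := fun h =>
    hC (hz.hasCycle_succ_of_adj_adj_succ hv (by omega) hⱼ h)
  have hvd : ¬G.Adj v (z (j - 1)) := fun h =>
    hC (hz.hasCycle_succ_of_adj_adj_succ hv (s := j - 1) (by omega) h
      (by rwa [Nat.sub_add_cancel (by omega)]))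
  have hac : ¬G.Adj (z 1) (z (j + 1)) := fun h =>
    hC (hz.hasCycle_succ_of_adj_succ_succ hv (by omega) (by omega) h₀ hⱼ h)
  have hbd : ¬G.Adj (z (j - 1)) (z (n - 1)) := fun h =>
    hC (hz.hasCycle_succ_of_adj_pred_pred hv (by omega) (by omega) h₀ hⱼ h)
  have hab : G.Adj (z 1) (z (n - 1)) := by
    by_contra h
    exact h5 <| hasCycle_compl_five_s5 (hnd [j + 1, 1, n - 1, j - 1])
      hvc (fun h' => hac h'.symm) h (fun h' => hbd h'.symm) (fun h' => hvd h'.symm)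
  have had : G.Adj (z 1) (z (j - 1)) := by
    by_contra h
    exact h5 <| hasCycle_compl_five_s5 (hnd [j + 1, 1, j - 1, n - 1])
      hvc (fun h' => hac h'.symm) h hbd (fun h' => hvb h'.symm)
  have hcd : G.Adj (z (j - 1)) (z (j + 1)) := by
    by_contra h
    exact h5 <| hasCycle_compl_five_s5 (hnd [1, j + 1, j - 1, n - 1])
      hva hac (fun h' => h h'.symm) hbd (fun h' => hvb h'.symm)
  have hchords : ¬(_ ∨ _ ∨ _ ∨ _) := fun h =>
    hC (hz.hasCycle_succ_of_chords hv hj hjn h₀ hⱼ hab had hcd h)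
  obtain ⟨h02, h2j, h1j, h0J⟩ := by simpa only [not_or] using hchords
  exact h5 <| hasCycle_compl_five_s5 (List.nodup_cons.1 (hnd [0, 2, j, 1, j + 1])).2
    h02 h2j (fun h' => h1j h'.symm) hac (fun h' => h0J h'.symm)

end IsCyclicSeq

end

theorem stmt_5_general {V : Type*} (G : SimpleGraph V)
    (h5 : ¬ hasCycle Gᶜ 5)
    (n : ℕ) (hn : 3 ≤ n) (x : ZMod n → V) (hinj : Function.Injective x)
    (hcyc : ∀ i : ZMod n, G.Adj (x i) (x (i + 1)))
    (v : V) (hv : v ∉ Set.range x)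
    (hj : ∃ j : ℕ, (j = 1 ∨ (3 ≤ j ∧ j ≤ n - 3) ∨ j = n - 1) ∧
      ∃ i : ZMod n, G.Adj v (x i) ∧ G.Adj v (x (i + (j : ZMod n)))) :
    hasCycle G (n + 1) := by
  obtain ⟨j, hj, i, hvi, hvij⟩ := hj
  have hz := isCyclicSeq_of_zmod hinj hcyc i
  have hv' : ∀ k < n, x (i + k) ≠ v := fun k _ h => hv ⟨_, h⟩
  have h₀ : G.Adj v (x (i + (0 : ℕ))) := by simpa using hvi
  rcases hj with rfl | ⟨hj, hjn⟩ | rfl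
  · exact hz.hasCycle_succ_of_adj_adj_succ hv' (s := 0) (by omega) h₀ hvij
  · exact hz.hasCycle_succ_of_adj_zero_adj h5 hv' hj (by omega) h₀ hvij
  · exact hz.hasCycle_succ_of_adj_pred_adj_zero (by omega) hv' hvij h₀

/-- Lemma 3.13: suppose the blue subgraph `Gᶜ` has no 5-cycle,
`x_1 x_2 ⋯ x_n x_1` is a red `n`-cycle, and `v` is a vertex off the cycle.
If for some `j ∈ {1} ∪ [3, n−3] ∪ {n−1}` and some `i` both edges `v x_i` and
`v x_{i+j}` are red (indices mod `n`), then `G` contains a red `(n+1)`-cycle. -/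
theorem stmt_5 {V : Type*} [Fintype V] (G : SimpleGraph V)
    (h5 : ¬ hasCycle Gᶜ 5)
    (n : ℕ) (hn : 3 ≤ n) (x : ZMod n → V) (hinj : Function.Injective x)
    (hcyc : ∀ i : ZMod n, G.Adj (x i) (x (i + 1)))
    (v : V) (hv : v ∉ Set.range x)
    (hj : ∃ j : ℕ, (j = 1 ∨ (3 ≤ j ∧ j ≤ n - 3) ∨ j = n - 1) ∧
      ∃ i : ZMod n, G.Adj v (x i) ∧ G.Adj v (x (i + (j : ZMod n)))) :
    hasCycle G (n + 1) :=
  stmt_5_general G h5 n hn x hinj hcyc v hv hj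
end

section
/- Let Γ1 and Γ2 be nonempty sets of cycles such that C_3 ∈ Γ1 ∩ Γ2 or C_4 ∈ Γ1 ∩ Γ2. Then R(Γ1, Γ2) = 5 if both C_3 ∈ Γ1 ∪ Γ2 and C_5 ∈ Γ1 ∪ Γ2, and R(Γ1, Γ2) = 6 otherwise. -/
/-- A red-blue graph on `Fin N` is modelled by its red subgraph
`G : SimpleGraph (Fin N)`; the blue subgraph is the complement `Gᶜ`.
`RamseyProp Γ1 Γ2 N` says that every red-blue graph on `N` vertices contains a
red cycle with length in `Γ1` or a blue cycle with length in `Γ2`. -/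
def RamseyProp (Γ1 Γ2 : Set ℕ) (N : ℕ) : Prop :=
  ∀ G : SimpleGraph (Fin N),
    (∃ m ∈ Γ1, hasCycle G m) ∨ (∃ m ∈ Γ2, hasCycle Gᶜ m)

/-- The generalised Ramsey number `R(Γ1, Γ2)` is the least element of this set. -/
def ramseySet (Γ1 Γ2 : Set ℕ) : Set ℕ := {N | 0 < N ∧ RamseyProp Γ1 Γ2 N}

/-!
A cycle in a graph on `n` vertices has length between 3 and `n`, so each lower bound comes from a
single colouring. On 4 vertices the red path `P₄` has a blue `P₄` as complement, and neither has a
cycle. On 5 vertices, the pentagon and the triangle with two pendant edges are each isomorphic to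
their complement. All cycles of the first have length 5; all cycles of the second have length 3.

For the upper bounds, some vertex of `K₆` has three neighbours of one colour. If no two of them are
joined in that colour, they form a triangle of the other colour. A monochromatic triangle can be
moved to `{0, 1, 2}`. What remains is finite: a colouring of `K₆` with a red triangle on
`{0, 1, 2}` has a monochromatic `C₄`, and the claims about `K₅` range over its `2¹⁰` colourings.
These are decided by encoding a colouring of `K_n` as a `C(n, 2)`-bit number and a cycle as the
bitmask of its edges. A cycle is monochromatic exactly when the colouring takes one value on all
bits of its mask (`hasCycle_colourGraph_iff`).
-/

open SimpleGraph

theorem List.IsChain.and {α : Type*} {R S : α → α → Prop} :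
    ∀ {l : List α}, l.IsChain R → l.IsChain S → l.IsChain fun a b => R a b ∧ S a b
  | [], _, _ => .nil
  | [_], _, _ => .singleton _
  | _ :: _ :: _, .cons_cons hR hl, .cons_cons hS hl' => .cons_cons ⟨hR, hS⟩ (hl.and hl')

theorem List.Nodup.isChain_ne_append_take_one {α : Type*} {l : List α} (hl : l.Nodup)
    (h2 : 2 ≤ l.length) : (l ++ l.take 1).IsChain (· ≠ ·) := by
  match l, h2 with
  | a :: b :: t, _ =>
    refine List.isChain_append.mpr ⟨List.Pairwise.isChain hl, .singleton a, ?_⟩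
    simp only [List.take_succ_cons, List.take_zero, List.head?_cons, Option.mem_def,
      Option.some.injEq, forall_eq']
    intro x hx hxa
    rw [List.getLast?_cons_cons] at hx
    exact (List.nodup_cons.mp hl).1 (hxa ▸ List.mem_of_getLast? hx)

theorem Nat.choose_two_add_le {j j' : ℕ} (h : j < j') : j.choose 2 + j ≤ j'.choose 2 :=
  calc j.choose 2 + j = (j + 1).choose 2 := by
        rw [Nat.choose_succ_succ' j 1, Nat.choose_one_right, add_comm]
    _ ≤ j'.choose 2 := Nat.choose_le_choose 2 h

section Cycles

variable {V W : Type*} {G : SimpleGraph V} {H : SimpleGraph W} {m : ℕ}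

theorem hasCycle.three_le (h : hasCycle G m) : 3 ≤ m := by
  obtain ⟨v, w, hw, rfl⟩ := h
  exact hw.three_le_length

theorem hasCycle.le_card [Fintype V] (h : hasCycle G m) : m ≤ Fintype.card V := by
  obtain ⟨v, w, hw, rfl⟩ := h
  have := hw.support_nodup.length_le_card
  rw [List.length_tail, w.length_support] at this
  omega

theorem hasCycle.map (f : G ↪g H) (h : hasCycle G m) : hasCycle H m := by
  obtain ⟨v, w, hw, rfl⟩ := h
  exact ⟨f v, w.map f.toHom, hw.map f.injective, w.length_map _⟩

theorem hasCycle_iff_exists_list (hm : 3 ≤ m) :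
    hasCycle G m ↔ ∃ l : List V, l.length = m ∧ l.Nodup ∧ (l ++ l.take 1).IsChain G.Adj := by
  constructor
  · rintro ⟨v, w, hw, rfl⟩
    refine ⟨w.support.dropLast, by simp, hw.nodup_dropLast_support, ?_⟩
    have htail : w.support.tail ≠ [] := List.ne_nil_of_length_pos (by rw [List.length_tail, Walk.length_support]; omega)
    have hclose : w.support.dropLast ++ w.support.dropLast.take 1 = w.support := by
      have hlast : w.support.tail.getLast htail = v := by
        rw [List.getLast_tail]; exact w.getLast_support
      rw [← w.cons_tail_support, List.dropLast_cons_of_ne_nil htail]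
      conv_rhs => rw [← List.dropLast_append_getLast htail, hlast]
      simp
    rw [hclose]
    exact w.isChain_adj_support
  · rintro ⟨_ | ⟨x, t⟩, hl, hnd, hc⟩
    · rw [List.length_nil] at hl; omega
    rw [List.take_succ_cons, List.take_zero, List.isChain_append] at hc
    obtain ⟨hpath, -, hlast⟩ := hc
    have hadj : G.Adj ((x :: t).getLast (List.cons_ne_nil x t)) x :=
      hlast _ (List.getLast?_eq_some_getLast _) x rfl
    have hp : (Walk.ofSupport (x :: t) (List.cons_ne_nil x t) hpath).IsPath := by
      rw [Walk.isPath_def, Walk.support_ofSupport]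
      exact hnd
    refine ⟨_, .cons hadj _, (Walk.cons_isCycle_iff _ hadj).mpr ⟨hp, fun he => ?_⟩, ?_⟩
    · have := hp.length_eq_one_of_mem_edges (Sym2.eq_swap ▸ he)
      rw [Walk.length_ofSupport] at this
      rw [List.length_cons] at this hl
      omega
    · change (Walk.ofSupport (x :: t) _ hpath).length + 1 = m
      rw [Walk.length_ofSupport, ← hl]
      simp

theorem hasCycle_three_of_adj {a b c : V} (hab : G.Adj a b) (hac : G.Adj a c) (hbc : G.Adj b c) :
    hasCycle G 3 := by
  classical
  exact is3Clique_iff_exists_cycle_length_three.mp ⟨_, is3Clique_triple_iff.mpr ⟨hab, hac, hbc⟩⟩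

theorem hasCycle_three_or_compl_of_three_le_degree [Fintype V] [DecidableRel G.Adj] {v : V}
    (h : 3 ≤ G.degree v) : hasCycle G 3 ∨ hasCycle Gᶜ 3 := by
  classical
  obtain ⟨s, hs, hcard⟩ := Finset.exists_subset_card_eq h
  obtain ⟨x, y, z, hxy, hxz, hyz, rfl⟩ := Finset.card_eq_three.mp hcard
  have hv : ∀ w ∈ ({x, y, z} : Finset V), G.Adj v w := fun w hw => by
    simpa using hs hw
  by_cases hxy' : G.Adj x y
  · exact .inl (hasCycle_three_of_adj (hv x (by simp)) (hv y (by simp)) hxy')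
  by_cases hxz' : G.Adj x z
  · exact .inl (hasCycle_three_of_adj (hv x (by simp)) (hv z (by simp)) hxz')
  by_cases hyz' : G.Adj y z
  · exact .inl (hasCycle_three_of_adj (hv y (by simp)) (hv z (by simp)) hyz')
  exact .inr (hasCycle_three_of_adj ⟨hxy, hxy'⟩ ⟨hxz, hxz'⟩ ⟨hyz, hyz'⟩)

theorem hasCycle_three_or_compl_of_six_le_card [Fintype V] (hV : 6 ≤ Fintype.card V) :
    hasCycle G 3 ∨ hasCycle Gᶜ 3 := by
  classical
  obtain ⟨v⟩ : Nonempty V := Fintype.card_pos_iff.mp (by omega)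
  by_cases h : 3 ≤ G.degree v
  · exact hasCycle_three_or_compl_of_three_le_degree h
  · have h' : 3 ≤ Gᶜ.degree v := by
      rw [degree_compl]; omega
    simpa only [compl_compl, or_comm] using hasCycle_three_or_compl_of_three_le_degree h'

end Cycles

section RamseyProp

variable {Γ1 Γ2 : Set ℕ} {N : ℕ}

theorem RamseyProp.mono {Γ1' Γ2' : Set ℕ} {N' : ℕ} (h1 : Γ1 ⊆ Γ1') (h2 : Γ2 ⊆ Γ2')
    (hN : N ≤ N') (h : RamseyProp Γ1 Γ2 N) : RamseyProp Γ1' Γ2' N' := by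
  intro G
  let e : G.comap (Fin.castLEEmb hN) ↪g G := Embedding.comap _ G
  rcases h (G.comap (Fin.castLEEmb hN)) with ⟨m, hm, hc⟩ | ⟨m, hm, hc⟩
  · exact .inl ⟨m, h1 hm, hc.map e⟩
  · exact .inr ⟨m, h2 hm, hc.map (Embedding.complEquiv e)⟩

theorem RamseyProp.symm (h : RamseyProp Γ1 Γ2 N) : RamseyProp Γ2 Γ1 N := fun G => by
  simpa only [compl_compl, or_comm] using h Gᶜ

theorem isLeast_ramseySet (h : RamseyProp Γ1 Γ2 (N + 1)) (h' : ¬ RamseyProp Γ1 Γ2 N) :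
    IsLeast (ramseySet Γ1 Γ2) (N + 1) :=
  ⟨⟨N.succ_pos, h⟩, fun _ ⟨_, hM⟩ => by
    by_contra! hlt
    exact h' (hM.mono subset_rfl subset_rfl (by omega))⟩

end RamseyProp

/-- The edge `{i, j}` of `K_n` is numbered `C(j, 2) + i` for `i < j`; this numbers the edges of
`K_n` by `0, …, C(n, 2) - 1`. -/
def pairIdx (i j : ℕ) : ℕ := (max i j).choose 2 + min i j

theorem pairIdx_comm (i j : ℕ) : pairIdx i j = pairIdx j i := by
  rw [pairIdx, pairIdx, max_comm, min_comm]

theorem pairIdx_of_lt {i j : ℕ} (h : i < j) : pairIdx i j = j.choose 2 + i := by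
  rw [pairIdx, max_eq_right h.le, min_eq_left h.le]

theorem pairIdx_inj {i j i' j' : ℕ} (h : i < j) (h' : i' < j') :
    pairIdx i j = pairIdx i' j' ↔ i = i' ∧ j = j' := by
  refine ⟨fun he => ?_, by rintro ⟨rfl, rfl⟩; rfl⟩
  rw [pairIdx_of_lt h, pairIdx_of_lt h'] at he
  rcases lt_trichotomy j j' with hj | rfl | hj
  · have := Nat.choose_two_add_le hj; omega
  · omega
  · have := Nat.choose_two_add_le hj; omega

theorem pairIdx_lt_choose {n i j : ℕ} (hi : i < n) (hj : j < n) (hij : i ≠ j) :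
    pairIdx i j < n.choose 2 := by
  rcases hij.lt_or_gt with h | h
  · have := Nat.choose_two_add_le hj; rw [pairIdx_of_lt h]; omega
  · have := Nat.choose_two_add_le hi; rw [pairIdx_comm, pairIdx_of_lt h]; omega

/-- The number `c` encodes the colouring of `K_n` in which the edge `{i, j}` is red exactly when
bit `pairIdx i j` of `c` is set; `colourGraph n c b` is the graph of its edges of colour `b`. -/
def colourGraph (n c : ℕ) (b : Bool) : SimpleGraph (Fin n) where
  Adj i j := i ≠ j ∧ c.testBit (pairIdx i j) = b
  symm := ⟨fun i j h => ⟨h.1.symm, pairIdx_comm j i ▸ h.2⟩⟩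
  loopless := ⟨fun _ h => h.1 rfl⟩

theorem colourGraph_adj {n c : ℕ} {b : Bool} {i j : Fin n} :
    (colourGraph n c b).Adj i j ↔ i ≠ j ∧ c.testBit (pairIdx i j) = b := Iff.rfl

theorem compl_colourGraph (n c : ℕ) : (colourGraph n c true)ᶜ = colourGraph n c false := by
  ext i j
  simp only [compl_adj, colourGraph_adj]
  cases c.testBit (pairIdx i j) <;> simp

theorem exists_colourGraph_eq {n : ℕ} (G : SimpleGraph (Fin n)) :
    ∃ c < 2 ^ n.choose 2, colourGraph n c true = G := by
  classical
  let s : Finset ℕ := ({p : Fin n × Fin n | p.1 < p.2 ∧ G.Adj p.1 p.2} : Finset _).image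
    fun p => pairIdx p.1 p.2
  have hs : ∀ {i j : Fin n}, i < j → (pairIdx i j ∈ s ↔ G.Adj i j) := by
    intro i j hij
    simp only [s, Finset.mem_image, Finset.mem_filter, Finset.mem_univ, true_and, Prod.exists]
    constructor
    · rintro ⟨i', j', ⟨hij', hadj⟩, he⟩
      obtain ⟨hi, hj⟩ := (pairIdx_inj hij' hij).mp he
      rwa [← Fin.ext hi, ← Fin.ext hj]
    · exact fun h => ⟨i, j, ⟨hij, h⟩, rfl⟩
  have hbit : ∀ e, (∑ e ∈ s, 2 ^ e).testBit e = true ↔ e ∈ s := fun e => by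
    rw [← Nat.mem_bitIndices, ← List.mem_toFinset, Finset.toFinset_bitIndices_sum_two_pow]
  refine ⟨∑ e ∈ s, 2 ^ e, Nat.geomSum_lt le_rfl ?_, ?_⟩
  · simp only [s, Finset.mem_image, Finset.mem_filter]
    rintro _ ⟨p, ⟨-, hp, -⟩, rfl⟩
    exact pairIdx_lt_choose p.1.2 p.2.2 (Fin.val_ne_of_ne hp.ne)
  · ext i j
    rw [colourGraph_adj, hbit]
    rcases lt_trichotomy i j with h | rfl | h
    · rw [hs h]; exact ⟨And.right, fun h' => ⟨h'.ne, h'⟩⟩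
    · simp
    · rw [pairIdx_comm, hs h]; exact ⟨fun h' => h'.2.symm, fun h' => ⟨h'.ne, h'.symm⟩⟩

def pathMask {n : ℕ} : List (Fin n) → ℕ
  | i :: j :: l => 2 ^ pairIdx i j ||| pathMask (j :: l)
  | _ => 0

def monoOn (c m : ℕ) (b : Bool) : Bool := c &&& m == if b then m else 0

theorem monoOn_iff {c m : ℕ} {b : Bool} :
    monoOn c m b = true ↔ ∀ e, m.testBit e = true → c.testBit e = b := by
  rw [monoOn, beq_iff_eq]
  constructor
  · intro h e he
    have := congrArg (Nat.testBit · e) h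
    simp only [Nat.testBit_and, he, Bool.and_true] at this
    cases b <;> simpa [he] using this
  · intro h
    apply Nat.eq_of_testBit_eq
    intro e
    rw [Nat.testBit_and]
    cases hm : m.testBit e <;> cases b <;> simp_all

theorem monoOn_pathMask {n c : ℕ} {b : Bool} :
    ∀ {l : List (Fin n)}, monoOn c (pathMask l) b = true ↔
      l.IsChain fun i j : Fin n => c.testBit (pairIdx i j) = b
  | [] | [_] => by simp [pathMask, monoOn_iff]
  | i :: j :: l => by
    rw [pathMask, List.isChain_cons_cons, ← monoOn_pathMask, monoOn_iff, monoOn_iff]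
    simp only [Nat.testBit_or, Nat.testBit_two_pow, Bool.or_eq_true, decide_eq_true_eq]
    constructor
    · intro h
      exact ⟨h _ (.inl rfl), fun e he => h e (.inr he)⟩
    · rintro ⟨h1, h2⟩ e (rfl | he)
      exacts [h1, h2 e he]

def distinctLists (n : ℕ) : ℕ → List (List (Fin n))
  | 0 => [[]]
  | k + 1 => (distinctLists n k).flatMap fun l => ((List.finRange n).filter (· ∉ l)).map (· :: l)

theorem mem_distinctLists {n k : ℕ} {l : List (Fin n)} :
    l ∈ distinctLists n k ↔ l.length = k ∧ l.Nodup := by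
  induction k generalizing l with
  | zero => simp +contextual [distinctLists]
  | succ k ih =>
    cases l with
    | nil => simp [distinctLists]
    | cons i l =>
      simp only [distinctLists, List.mem_flatMap, List.mem_map, List.mem_filter, List.mem_finRange,
        ih, List.length_cons, List.nodup_cons]
      aesop

/-- The edge masks of the `k`-cycles of `K_n`, each cycle given by its vertex list closed up with
its first vertex. Lists of fewer than 3 vertices are excluded: they are not cycles. -/
def cycleMasks (n k : ℕ) : List ℕ :=
  if k < 3 then [] else ((distinctLists n k).map fun l => pathMask (l ++ l.take 1)).dedup

theorem hasCycle_colourGraph_iff {n c k : ℕ} {b : Bool} :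
    hasCycle (colourGraph n c b) k ↔ (cycleMasks n k).any (monoOn c · b) = true := by
  by_cases hk : k < 3
  · simp only [cycleMasks, if_pos hk, List.any_nil, Bool.false_eq_true, iff_false]
    exact fun h => by have := h.three_le; omega
  rw [hasCycle_iff_exists_list (by omega)]
  simp only [cycleMasks, if_neg hk, List.any_eq_true, List.mem_dedup, List.mem_map,
    mem_distinctLists]
  constructor
  · rintro ⟨l, hl, hnd, hc⟩
    exact ⟨_, ⟨l, ⟨hl, hnd⟩, rfl⟩, monoOn_pathMask.mpr (hc.imp fun _ _ h => h.2)⟩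
  · rintro ⟨_, ⟨l, ⟨hl, hnd⟩, rfl⟩, h⟩
    exact ⟨l, hl, hnd, (hnd.isChain_ne_append_take_one (by omega)).and (monoOn_pathMask.mp h)⟩

def monoCycleIn (n c : ℕ) (b : Bool) (A : List ℕ) : Bool :=
  A.any fun k => (cycleMasks n k).any (monoOn c · b)

theorem monoCycleIn_iff {n c : ℕ} {b : Bool} {A : List ℕ} :
    monoCycleIn n c b A = true ↔ ∃ k ∈ A, hasCycle (colourGraph n c b) k := by
  simp [monoCycleIn, hasCycle_colourGraph_iff]

def ramseyCheck (n : ℕ) (A B : List ℕ) (red : ℕ) : Bool :=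
  (List.range (2 ^ n.choose 2)).all fun c =>
    !monoOn c red true || monoCycleIn n c true A || monoCycleIn n c false B

theorem exists_hasCycle_of_ramseyCheck {n : ℕ} {A B : List ℕ} {l : List (Fin n)}
    (h : ramseyCheck n A B (pathMask l) = true) {G : SimpleGraph (Fin n)} (hl : l.IsChain G.Adj) :
    (∃ k ∈ A, hasCycle G k) ∨ (∃ k ∈ B, hasCycle Gᶜ k) := by
  obtain ⟨c, hc, rfl⟩ := exists_colourGraph_eq G
  have hred : monoOn c (pathMask l) true = true := monoOn_pathMask.mpr (hl.imp fun _ _ h => h.2)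
  have := List.all_eq_true.mp h c (List.mem_range.mpr hc)
  simp only [hred, Bool.not_true, Bool.false_or, Bool.or_eq_true, monoCycleIn_iff] at this
  rwa [compl_colourGraph]

theorem ramseyProp_of_ramseyCheck {n : ℕ} {A B : List ℕ} {Γ1 Γ2 : Set ℕ}
    (h : ramseyCheck n A B 0 = true) (hA : ∀ k ∈ A, k ∈ Γ1) (hB : ∀ k ∈ B, k ∈ Γ2) :
    RamseyProp Γ1 Γ2 n := fun _ =>
  (exists_hasCycle_of_ramseyCheck (l := []) h .nil).imp (fun ⟨k, hk, hc⟩ => ⟨k, hA k hk, hc⟩)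
    fun ⟨k, hk, hc⟩ => ⟨k, hB k hk, hc⟩

theorem not_ramseyProp_of_colouring {Γ1 Γ2 : Set ℕ} {n c : ℕ}
    (h : ∀ k ≤ n, ∀ b, (cycleMasks n k).any (monoOn c · b) = true → k ∉ Γ1 ∪ Γ2) :
    ¬ RamseyProp Γ1 Γ2 n := by
  intro hR
  have hlen : ∀ {b k}, hasCycle (colourGraph n c b) k → k ∉ Γ1 ∪ Γ2 := fun hk =>
    h _ (Fintype.card_fin n ▸ hk.le_card) _ (hasCycle_colourGraph_iff.mp hk)
  rcases hR (colourGraph n c true) with ⟨k, hk, hc⟩ | ⟨k, hk, hc⟩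
  · exact hlen hc (.inl hk)
  · rw [compl_colourGraph] at hc
    exact hlen hc (.inr hk)

def edgeCode (es : List (ℕ × ℕ)) : ℕ := (es.map fun e => 2 ^ pairIdx e.1 e.2).sum

theorem not_ramseyProp_four (Γ1 Γ2 : Set ℕ) : ¬ RamseyProp Γ1 Γ2 4 := by
  have hP4 : ∀ k ≤ 4, ∀ b,
      (cycleMasks 4 k).any (monoOn (edgeCode [(0, 1), (1, 2), (2, 3)]) · b) = true → False := by
    decide +kernel
  exact not_ramseyProp_of_colouring fun k hk b h => (hP4 k hk b h).elim

theorem not_ramseyProp_five_of_three {Γ1 Γ2 : Set ℕ} (h3 : 3 ∉ Γ1 ∪ Γ2) :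
    ¬ RamseyProp Γ1 Γ2 5 := by
  have hH : ∀ k ≤ 5, ∀ b,
      (cycleMasks 5 k).any (monoOn (edgeCode [(0, 1), (0, 2), (1, 2), (1, 3), (0, 4)]) · b) = true →
        k = 3 := by
    decide +kernel
  exact not_ramseyProp_of_colouring fun k hk b h => hH k hk b h ▸ h3

theorem not_ramseyProp_five_of_five {Γ1 Γ2 : Set ℕ} (h5 : 5 ∉ Γ1 ∪ Γ2) :
    ¬ RamseyProp Γ1 Γ2 5 := by
  have hC5 : ∀ k ≤ 5, ∀ b,
      (cycleMasks 5 k).any (monoOn (edgeCode [(0, 1), (1, 2), (2, 3), (3, 4), (0, 4)]) · b) = true →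
        k = 5 := by
    decide +kernel
  exact not_ramseyProp_of_colouring fun k hk b h => hC5 k hk b h ▸ h5

theorem ramseyProp_35_3_five : RamseyProp {3, 5} {3} 5 :=
  ramseyProp_of_ramseyCheck (A := [3, 5]) (B := [3]) (by decide +kernel) (by simp) (by simp)

theorem ramseyProp_345_4_five : RamseyProp {3, 4, 5} {4} 5 :=
  ramseyProp_of_ramseyCheck (A := [3, 4, 5]) (B := [4]) (by decide +kernel) (by simp) (by simp)

theorem ramseyProp_34_45_five : RamseyProp {3, 4} {4, 5} 5 :=
  ramseyProp_of_ramseyCheck (A := [3, 4]) (B := [4, 5]) (by decide +kernel) (by simp) (by simp)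

theorem ramseyProp_3_3_six : RamseyProp {3} {3} 6 := fun G => by
  simpa using hasCycle_three_or_compl_of_six_le_card (G := G) (by simp)

theorem exists_perm_isChain_triangle {G : SimpleGraph (Fin 6)} (h : hasCycle G 3) :
    ∃ σ : Equiv.Perm (Fin 6), [0, 1, 2, 0].IsChain (G.comap σ).Adj := by
  classical
  obtain ⟨s, hs⟩ := is3Clique_iff_exists_cycle_length_three.mpr h
  obtain ⟨a, b, c, hab, hac, hbc, -⟩ := is3Clique_iff.mp hs
  obtain ⟨σ, hσ⟩ := Equiv.Perm.exists_extending_pair ![(0 : Fin 6), 1, 2] ![a, b, c]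
    (by decide) (by
      intro i j hij
      fin_cases i <;> fin_cases j <;>
        simp_all [hab.ne, hac.ne, hbc.ne, hab.ne.symm, hac.ne.symm, hbc.ne.symm])
  refine ⟨σ, ?_⟩
  have h0 : σ 0 = a := hσ 0
  have h1 : σ 1 = b := hσ 1
  have h2 : σ 2 = c := hσ 2
  simp [h0, h1, h2, hab, hbc, hac.symm]

/-- Fixing a red triangle on `{0, 1, 2}` leaves `2¹²` colourings to check instead of `2¹⁵`. -/
theorem hasCycle_four_or_compl_of_triangle {G : SimpleGraph (Fin 6)}
    (h : [0, 1, 2, 0].IsChain G.Adj) : hasCycle G 4 ∨ hasCycle Gᶜ 4 := by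
  simpa using exists_hasCycle_of_ramseyCheck (A := [4]) (B := [4]) (by decide +kernel) h

theorem ramseyProp_4_4_six : RamseyProp {4} {4} 6 := by
  intro G
  wlog hG : hasCycle G 3 generalizing G
  · have hGc := (hasCycle_three_or_compl_of_six_le_card (G := G) (by simp)).resolve_left hG
    simpa only [compl_compl, or_comm] using this Gᶜ hGc
  obtain ⟨σ, hσ⟩ := exists_perm_isChain_triangle hG
  let e : G.comap σ ↪g G := Embedding.comap σ.toEmbedding G
  simp only [Set.mem_singleton_iff, exists_eq_left]
  exact (hasCycle_four_or_compl_of_triangle hσ).imp (·.map e) (·.map (Embedding.complEquiv e))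

theorem ramseyProp_six {Γ1 Γ2 : Set ℕ} (h34 : 3 ∈ Γ1 ∩ Γ2 ∨ 4 ∈ Γ1 ∩ Γ2) :
    RamseyProp Γ1 Γ2 6 := by
  rcases h34 with ⟨h1, h2⟩ | ⟨h1, h2⟩
  · exact ramseyProp_3_3_six.mono (by simpa) (by simpa) le_rfl
  · exact ramseyProp_4_4_six.mono (by simpa) (by simpa) le_rfl

theorem ramseyProp_five {Γ1 Γ2 : Set ℕ} (h34 : 3 ∈ Γ1 ∩ Γ2 ∨ 4 ∈ Γ1 ∩ Γ2)
    (h3 : 3 ∈ Γ1 ∪ Γ2) (h5 : 5 ∈ Γ1 ∪ Γ2) : RamseyProp Γ1 Γ2 5 := by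
  rcases h34 with ⟨h31, h32⟩ | ⟨h41, h42⟩
  · rcases h5 with h5 | h5
    · exact ramseyProp_35_3_five.mono (by simp [Set.insert_subset_iff, *]) (by simpa) le_rfl
    · exact ramseyProp_35_3_five.symm.mono (by simpa) (by simp [Set.insert_subset_iff, *]) le_rfl
  · rcases h3 with h3 | h3 <;> rcases h5 with h5 | h5
    · exact ramseyProp_345_4_five.mono (by simp [Set.insert_subset_iff, *]) (by simpa) le_rfl
    · exact ramseyProp_34_45_five.mono (by simp [Set.insert_subset_iff, *])
        (by simp [Set.insert_subset_iff, *]) le_rfl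
    · exact ramseyProp_34_45_five.symm.mono (by simp [Set.insert_subset_iff, *])
        (by simp [Set.insert_subset_iff, *]) le_rfl
    · exact ramseyProp_345_4_five.symm.mono (by simpa) (by simp [Set.insert_subset_iff, *]) le_rfl

theorem stmt_10_general (Γ1 Γ2 : Set ℕ)
    (h34 : 3 ∈ Γ1 ∩ Γ2 ∨ 4 ∈ Γ1 ∩ Γ2) :
    ((3 ∈ Γ1 ∪ Γ2 ∧ 5 ∈ Γ1 ∪ Γ2) → IsLeast (ramseySet Γ1 Γ2) 5) ∧
    (¬ (3 ∈ Γ1 ∪ Γ2 ∧ 5 ∈ Γ1 ∪ Γ2) → IsLeast (ramseySet Γ1 Γ2) 6) := by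
  refine ⟨fun ⟨h3, h5⟩ => isLeast_ramseySet (ramseyProp_five h34 h3 h5) (not_ramseyProp_four Γ1 Γ2),
    fun h => isLeast_ramseySet (ramseyProp_six h34) ?_⟩
  rcases not_and_or.mp h with h3 | h5
  exacts [not_ramseyProp_five_of_three h3, not_ramseyProp_five_of_five h5]

/-- Proposition 4.2: if `C_3 ∈ Γ1 ∩ Γ2` or `C_4 ∈ Γ1 ∩ Γ2`, then
`R(Γ1, Γ2) = 5` if both `C_3` and `C_5` belong to `Γ1 ∪ Γ2`, and
`R(Γ1, Γ2) = 6` otherwise. -/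
theorem stmt_10 (Γ1 Γ2 : Set ℕ)
    (hc1 : ∀ m ∈ Γ1, 3 ≤ m) (hc2 : ∀ m ∈ Γ2, 3 ≤ m)
    (h34 : 3 ∈ Γ1 ∩ Γ2 ∨ 4 ∈ Γ1 ∩ Γ2) :
    ((3 ∈ Γ1 ∪ Γ2 ∧ 5 ∈ Γ1 ∪ Γ2) → IsLeast (ramseySet Γ1 Γ2) 5) ∧
    (¬ (3 ∈ Γ1 ∪ Γ2 ∧ 5 ∈ Γ1 ∪ Γ2) → IsLeast (ramseySet Γ1 Γ2) 6) :=
  stmt_10_general Γ1 Γ2 h34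
end
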